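/- Let G be a finite graph with loops and let H be obtained from G by deleting k = l + s + m edges, where l of the deleted edges join two vertices with opinion +1 (under an optimal opinion function of the graph before each deletion), s join two vertices with opinion -1, and m are the remaining deleted edges. Then -4l - 2m ≤ γ(G) - γ(H) ≤ 2k. -/

import Mathlib

open scoped Classical
open Finset

/-- Sum of opinions over the closed neighborhood of `v` (closed since every
vertex has a loop, so `v` itself is counted). -/
noncomputable def nbrSum {V : Type*} [Fintype V] (G : SimpleGraph V) (f : V → ℤ) (v : V) : ℤ :=
  ∑ w ∈ univ.filter (fun w => G.Adj v w ∨ w = v), f w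

/-- `f` is an opinion function: every value is `1` or `-1`. -/
def IsOpinion {V : Type*} (f : V → ℤ) : Prop := ∀ v, f v = 1 ∨ f v = -1

/-- The set of vertices voting 'yes'. -/
noncomputable def yesVoters {V : Type*} [Fintype V] (G : SimpleGraph V) (f : V → ℤ) : Finset V :=
  univ.filter (fun v => 0 < nbrSum G f v)

/-- `f` is strictly majoritarian on `G`: more than `|V|/2` vertices vote 'yes'. -/
def Majoritarian {V : Type*} [Fintype V] (G : SimpleGraph V) (f : V → ℤ) : Prop :=
  Fintype.card V < 2 * (yesVoters G f).card

/-- The strict domination number: minimum of `f(V)` over strictly majoritarian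
opinion functions. -/
noncomputable def gamma {V : Type*} [Fintype V] (G : SimpleGraph V) : ℤ :=
  sInf {t : ℤ | ∃ f : V → ℤ, IsOpinion f ∧ Majoritarian G f ∧ t = ∑ v, f v}


/-! Deleting an edge `ab` changes neighborhood sums only at `a` and `b`, each by the opinion of
the other endpoint. Hence an optimal opinion function of one graph becomes strictly majoritarian
for the other after raising a few `-1` opinions to `+1`, at a cost of `2` each. For
`γ(G) ≤ γ(G - ab) + 2` one raises a `-1` endpoint, if there is one. For
`γ(G - ab) ≤ f(V) + f(a) + f(b) + 2` one raises nothing if `f(a) = f(b) = -1`, the `-1` endpoint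
if the endpoints disagree, and if `f(a) = f(b) = 1` one `-1` vertex in the closed neighborhood of
each endpoint (an endpoint whose closed neighborhood is entirely `+1` has sum at least `2`, so it
survives losing a neighbor). Along the deletion sequence these bounds telescope, and
`f(a) + f(b) + 2` is `4`, `0` or `2` in the three cases. -/

section Opinion

variable {V : Type*}

lemma IsOpinion.le_one {f : V → ℤ} (hf : IsOpinion f) (v : V) : f v ≤ 1 := by
  rcases hf v with h | h <;> omega

lemma IsOpinion.neg_one_le {f : V → ℤ} (hf : IsOpinion f) (v : V) : -1 ≤ f v := by
  rcases hf v with h | h <;> omega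

lemma IsOpinion.piecewise_one {f : V → ℤ} (hf : IsOpinion f) (S : Finset V) :
    IsOpinion (S.piecewise (fun _ => 1) f) := by
  intro v
  by_cases hv : v ∈ S
  · simp [hv]
  · simpa [hv] using hf v

lemma sum_piecewise_one {f : V → ℤ} {S : Finset V} (hS : ∀ c ∈ S, f c = -1) (T : Finset V) :
    ∑ w ∈ T, S.piecewise (fun _ => 1) f w = ∑ w ∈ T, f w + 2 * #(T ∩ S) := by
  rw [sum_piecewise, ← sum_inter_add_sum_sdiff T S f,
    sum_congr rfl fun c hc => hS c (mem_inter.1 hc).2]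
  simp only [sum_const, nsmul_eq_mul, mul_one, mul_neg]
  ring

end Opinion

section Voting

variable {V : Type*} [Fintype V]

noncomputable def closedNbhd (G : SimpleGraph V) (v : V) : Finset V :=
  univ.filter (fun w => G.Adj v w ∨ w = v)

@[simp]
lemma mem_closedNbhd {G : SimpleGraph V} {v w : V} :
    w ∈ closedNbhd G v ↔ G.Adj v w ∨ w = v := by
  simp [closedNbhd]

lemma nbrSum_eq_sum_closedNbhd (G : SimpleGraph V) (f : V → ℤ) (v : V) :
    nbrSum G f v = ∑ w ∈ closedNbhd G v, f w :=
  rfl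

lemma nbrSum_piecewise_one (G : SimpleGraph V) {f : V → ℤ} {S : Finset V}
    (hS : ∀ c ∈ S, f c = -1) (v : V) :
    nbrSum G (S.piecewise (fun _ => 1) f) v = nbrSum G f v + 2 * #(closedNbhd G v ∩ S) :=
  sum_piecewise_one hS _

lemma Majoritarian.of_nbrSum_pos_imp {G G' : SimpleGraph V} {f g : V → ℤ}
    (hm : Majoritarian G f) (h : ∀ v, 0 < nbrSum G f v → 0 < nbrSum G' g v) :
    Majoritarian G' g := by
  refine hm.trans_le (Nat.mul_le_mul_left 2 (card_le_card fun v hv => ?_))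
  simp only [yesVoters, mem_filter, mem_univ, true_and] at hv ⊢
  exact h v hv

lemma majoritarian_one [Nonempty V] (G : SimpleGraph V) : Majoritarian G 1 := by
  have hyes : yesVoters G 1 = univ := by
    ext v
    simp only [yesVoters, nbrSum_eq_sum_closedNbhd, mem_filter, mem_univ, true_and, iff_true,
      Pi.one_apply, sum_const, nsmul_eq_mul, mul_one, Nat.cast_pos]
    exact card_pos.2 ⟨v, by simp⟩
  rw [Majoritarian, hyes, card_univ]
  have := Fintype.card_pos (α := V)
  omega

lemma bddBelow_gamma_set (G : SimpleGraph V) :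
    BddBelow {t : ℤ | ∃ f, IsOpinion f ∧ Majoritarian G f ∧ t = ∑ v, f v} := by
  refine ⟨-Fintype.card V, ?_⟩
  rintro t ⟨f, hf, -, rfl⟩
  simpa using sum_le_sum fun v (_ : v ∈ univ) => hf.neg_one_le v

lemma gamma_le_sum {G : SimpleGraph V} {f : V → ℤ} (hf : IsOpinion f) (hm : Majoritarian G f) :
    gamma G ≤ ∑ v, f v :=
  csInf_le (bddBelow_gamma_set G) ⟨f, hf, hm, rfl⟩

lemma exists_sum_eq_gamma [Nonempty V] (G : SimpleGraph V) :
    ∃ f : V → ℤ, IsOpinion f ∧ Majoritarian G f ∧ ∑ v, f v = gamma G := by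
  have hne : {t : ℤ | ∃ f, IsOpinion f ∧ Majoritarian G f ∧ t = ∑ v, f v}.Nonempty :=
    ⟨_, 1, fun _ => Or.inl rfl, majoritarian_one G, rfl⟩
  obtain ⟨f, hf, hm, hsum⟩ := Int.csInf_mem hne (bddBelow_gamma_set G)
  exact ⟨f, hf, hm, hsum.symm⟩

lemma closedNbhd_deleteEdges_of_ne {G : SimpleGraph V} {a b v : V} (hva : v ≠ a) (hvb : v ≠ b) :
    closedNbhd (G.deleteEdges {s(a, b)}) v = closedNbhd G v := by
  ext w
  simp [hva, hvb]

lemma nbrSum_eq_nbrSum_deleteEdges_add {G : SimpleGraph V} {a b : V} (hadj : G.Adj a b)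
    (f : V → ℤ) : nbrSum G f a = nbrSum (G.deleteEdges {s(a, b)}) f a + f b := by
  have hab := G.ne_of_adj hadj
  have hb : b ∉ closedNbhd (G.deleteEdges {s(a, b)}) a := by simp [hab.symm]
  have hins : closedNbhd G a = insert b (closedNbhd (G.deleteEdges {s(a, b)}) a) := by
    ext w
    by_cases hw : w = b
    · simp [hw, hadj]
    · simp [hw, hab]
  rw [nbrSum_eq_sum_closedNbhd, hins, sum_insert hb, add_comm]
  rfl

lemma nbrSum_deleteEdges {G : SimpleGraph V} {a b : V} (hadj : G.Adj a b) (f : V → ℤ) (v : V) :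
    nbrSum G f v = nbrSum (G.deleteEdges {s(a, b)}) f v
      + if v = a then f b else if v = b then f a else 0 := by
  by_cases hva : v = a
  · subst hva
    simp [nbrSum_eq_nbrSum_deleteEdges_add hadj]
  by_cases hvb : v = b
  · subst hvb
    rw [Sym2.eq_swap]
    simp [hva, nbrSum_eq_nbrSum_deleteEdges_add hadj.symm]
  simp [hva, hvb, nbrSum_eq_sum_closedNbhd, closedNbhd_deleteEdges_of_ne hva hvb]

end Voting

section EdgeDeletion

variable {V : Type*} [Fintype V] {G : SimpleGraph V} {a b : V}

lemma Majoritarian.of_deleteEdges {h : V → ℤ} (hadj : G.Adj a b)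
    (hm : Majoritarian (G.deleteEdges {s(a, b)}) h) (ha : h a = 1) (hb : h b = 1) :
    Majoritarian G h :=
  hm.of_nbrSum_pos_imp fun v hv => by
    rw [nbrSum_deleteEdges hadj]
    split_ifs <;> omega

lemma gamma_le_sum_add_two_of_deleteEdges {h : V → ℤ} (hadj : G.Adj a b) (hh : IsOpinion h)
    (hm : Majoritarian (G.deleteEdges {s(a, b)}) h) (hb : h b = -1) :
    gamma G ≤ ∑ v, h v + 2 := by
  set H := G.deleteEdges {s(a, b)}
  set g := ({b} : Finset V).piecewise (fun _ => 1) h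
  have hS : ∀ c ∈ ({b} : Finset V), h c = -1 := by simpa
  have hgb : g b = 1 := by simp [g]
  have hga : -1 ≤ g a := (hh.piecewise_one {b}).neg_one_le a
  have hbb : #(closedNbhd H b ∩ {b}) = 1 := by simp
  have hmaj : Majoritarian G g := hm.of_nbrSum_pos_imp fun v hv => by
    rw [nbrSum_deleteEdges hadj, nbrSum_piecewise_one H hS]
    split_ifs with hva hvb <;> subst_vars <;> omega
  calc gamma G ≤ ∑ v, g v := gamma_le_sum (hh.piecewise_one {b}) hmaj
    _ = ∑ v, h v + 2 := by simp [g, sum_piecewise_one hS]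

lemma gamma_le_gamma_deleteEdges_add_two (hadj : G.Adj a b) :
    gamma G ≤ gamma (G.deleteEdges {s(a, b)}) + 2 := by
  have : Nonempty V := ⟨a⟩
  obtain ⟨h, hh, hm, hsum⟩ := exists_sum_eq_gamma (G.deleteEdges {s(a, b)})
  rw [← hsum]
  rcases hh b with hb | hb
  · rcases hh a with ha | ha
    · linarith [gamma_le_sum hh (hm.of_deleteEdges hadj ha hb)]
    · rw [Sym2.eq_swap] at hm
      exact gamma_le_sum_add_two_of_deleteEdges hadj.symm hh hm ha
  · exact gamma_le_sum_add_two_of_deleteEdges hadj hh hm hb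

lemma Majoritarian.deleteEdges_of_neg_one {f : V → ℤ} (hadj : G.Adj a b) (hm : Majoritarian G f)
    (ha : f a = -1) (hb : f b = -1) : Majoritarian (G.deleteEdges {s(a, b)}) f :=
  hm.of_nbrSum_pos_imp fun v hv => by
    rw [nbrSum_deleteEdges hadj] at hv
    split_ifs at hv <;> omega

lemma Majoritarian.deleteEdges_piecewise {f : V → ℤ} {S : Finset V} (hadj : G.Adj a b)
    (hf : IsOpinion f) (hm : Majoritarian G f) (hS : ∀ c ∈ S, f c = -1)
    (ha : 0 < nbrSum G f a → 2 ≤ nbrSum G f a + 2 * #(closedNbhd G a ∩ S))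
    (hb : 0 < nbrSum G f b → 2 ≤ nbrSum G f b + 2 * #(closedNbhd G b ∩ S)) :
    Majoritarian (G.deleteEdges {s(a, b)}) (S.piecewise (fun _ => 1) f) := by
  have hga := (hf.piecewise_one S).le_one a
  have hgb := (hf.piecewise_one S).le_one b
  refine hm.of_nbrSum_pos_imp fun v hv => ?_
  have key := nbrSum_deleteEdges hadj (S.piecewise (fun _ => 1) f) v
  rw [nbrSum_piecewise_one G hS] at key
  split_ifs at key <;> subst_vars <;> omega

lemma exists_card_le_one_flip_of_adj {f : V → ℤ} {x y : V} (hf : IsOpinion f)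
    (hadj : G.Adj x y) :
    ∃ T : Finset V, #T ≤ 1 ∧ (∀ c ∈ T, f c = -1) ∧
      (0 < nbrSum G f x → 2 ≤ nbrSum G f x + 2 * #(closedNbhd G x ∩ T)) := by
  by_cases hneg : ∃ c ∈ closedNbhd G x, f c = -1
  · obtain ⟨c, hc, hfc⟩ := hneg
    refine ⟨{c}, by simp, by simpa, fun hpos => ?_⟩
    rw [inter_singleton_of_mem hc, card_singleton]
    omega
  · push Not at hneg
    refine ⟨∅, by simp, by simp, fun _ => ?_⟩
    have hsum : nbrSum G f x = #(closedNbhd G x) := by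
      rw [nbrSum_eq_sum_closedNbhd, sum_congr rfl fun c hc => (hf c).resolve_right (hneg c hc)]
      simp
    have hpair : ({x, y} : Finset V) ⊆ closedNbhd G x := by simp [insert_subset_iff, hadj]
    have := card_le_card hpair
    rw [card_pair (G.ne_of_adj hadj)] at this
    simp only [inter_empty, card_empty]
    omega

lemma gamma_deleteEdges_le_sum_add_card {f : V → ℤ} {S : Finset V} (hadj : G.Adj a b)
    (hf : IsOpinion f) (hm : Majoritarian G f) (hS : ∀ c ∈ S, f c = -1)
    (ha : 0 < nbrSum G f a → 2 ≤ nbrSum G f a + 2 * #(closedNbhd G a ∩ S))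
    (hb : 0 < nbrSum G f b → 2 ≤ nbrSum G f b + 2 * #(closedNbhd G b ∩ S)) :
    gamma (G.deleteEdges {s(a, b)}) ≤ ∑ v, f v + 2 * #S := by
  calc gamma (G.deleteEdges {s(a, b)}) ≤ ∑ v, S.piecewise (fun _ => 1) f v :=
        gamma_le_sum (hf.piecewise_one S) (hm.deleteEdges_piecewise hadj hf hS ha hb)
    _ = ∑ v, f v + 2 * #S := by rw [sum_piecewise_one hS, univ_inter]

lemma gamma_deleteEdges_le {f : V → ℤ} (hadj : G.Adj a b) (hf : IsOpinion f)
    (hm : Majoritarian G f) :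
    gamma (G.deleteEdges {s(a, b)}) ≤ ∑ v, f v + f a + f b + 2 := by
  have hmem_a : a ∈ closedNbhd G a ∧ a ∈ closedNbhd G b := by simp [hadj.symm]
  have hmem_b : b ∈ closedNbhd G a ∧ b ∈ closedNbhd G b := by simp [hadj]
  rcases hf a with ha | ha <;> rcases hf b with hb | hb
  · obtain ⟨Ta, hTa, hTa_neg, hcover_a⟩ := exists_card_le_one_flip_of_adj hf hadj
    obtain ⟨Tb, hTb, hTb_neg, hcover_b⟩ := exists_card_le_one_flip_of_adj hf hadj.symm
    have := gamma_deleteEdges_le_sum_add_card (S := Ta ∪ Tb) hadj hf hm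
      (by simpa [or_imp, forall_and] using And.intro hTa_neg hTb_neg)
      (fun h => (hcover_a h).trans (by gcongr; exact subset_union_left))
      (fun h => (hcover_b h).trans (by gcongr; exact subset_union_right))
    have := card_union_le Ta Tb
    omega
  · have := gamma_deleteEdges_le_sum_add_card (S := {b}) hadj hf hm (by simpa)
      (fun _ => by rw [inter_singleton_of_mem hmem_b.1, card_singleton]; omega)
      (fun _ => by rw [inter_singleton_of_mem hmem_b.2, card_singleton]; omega)
    simp only [card_singleton] at this
    omega
  · have := gamma_deleteEdges_le_sum_add_card (S := {a}) hadj hf hm (by simpa)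
      (fun _ => by rw [inter_singleton_of_mem hmem_a.1, card_singleton]; omega)
      (fun _ => by rw [inter_singleton_of_mem hmem_a.2, card_singleton]; omega)
    simp only [card_singleton] at this
    omega
  · linarith [gamma_le_sum hf (hm.deleteEdges_of_neg_one hadj ha hb)]

end EdgeDeletion

lemma Fin.sum_castSucc_sub_succ {M : Type*} [AddCommGroup M] :
    ∀ {k : ℕ} (g : Fin (k + 1) → M),
      ∑ i : Fin k, (g i.castSucc - g i.succ) = g 0 - g (Fin.last k)
  | 0, g => by simp
  | k + 1, g => by
    rw [Fin.sum_univ_succ]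
    simp only [← Fin.succ_castSucc]
    rw [Fin.sum_castSucc_sub_succ (fun i => g i.succ), Fin.succ_last]
    simp only [Fin.castSucc_zero]
    abel

lemma IsOpinion.add_add_two {V : Type*} {f : V → ℤ} (hf : IsOpinion f) (a b : V) :
    f a + f b + 2 =
      2 + 2 * (if f a = 1 ∧ f b = 1 then 1 else 0)
        - 2 * (if f a = -1 ∧ f b = -1 then 1 else 0) := by
  rcases hf a with ha | ha <;> rcases hf b with hb | hb <;> simp [ha, hb]

theorem stmt7_general {V : Type*} [Fintype V] (G H : SimpleGraph V) (l q m : ℕ)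
    (Gs : Fin (l + q + m + 1) → SimpleGraph V)
    (e : Fin (l + q + m) → V × V)
    (f : Fin (l + q + m) → V → ℤ)
    (h0 : Gs 0 = G) (hlast : Gs (Fin.last _) = H)
    (hstep : ∀ i : Fin (l + q + m),
      (e i).1 ≠ (e i).2 ∧ (Gs i.castSucc).Adj (e i).1 (e i).2 ∧
        Gs i.succ = (Gs i.castSucc).deleteEdges {s((e i).1, (e i).2)})
    (hopt : ∀ i : Fin (l + q + m), IsOpinion (f i) ∧ Majoritarian (Gs i.castSucc) (f i) ∧
      ∑ w, f i w = gamma (Gs i.castSucc))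
    (hl : l = (univ.filter (fun i : Fin (l + q + m) =>
      f i (e i).1 = 1 ∧ f i (e i).2 = 1)).card)
    (hq : q = (univ.filter (fun i : Fin (l + q + m) =>
      f i (e i).1 = -1 ∧ f i (e i).2 = -1)).card) :
    -4 * l - 2 * m ≤ gamma G - gamma H ∧ gamma G - gamma H ≤ 2 * (l + q + m) := by
  have htel : gamma G - gamma H =
      ∑ i : Fin (l + q + m), (gamma (Gs i.castSucc) - gamma (Gs i.succ)) := by
    rw [Fin.sum_castSucc_sub_succ (fun j => gamma (Gs j)), h0, hlast]
  have hsteps : ∀ i, -(f i (e i).1 + f i (e i).2 + 2) ≤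
      gamma (Gs i.castSucc) - gamma (Gs i.succ) ∧
        gamma (Gs i.castSucc) - gamma (Gs i.succ) ≤ 2 := fun i => by
    obtain ⟨-, hadj, hdel⟩ := hstep i
    obtain ⟨hf, hm, hsum⟩ := hopt i
    rw [hdel]
    constructor
    · linarith [gamma_deleteEdges_le hadj hf hm]
    · linarith [gamma_le_gamma_deleteEdges_add_two hadj]
  have hcost : ∑ i, (f i (e i).1 + f i (e i).2 + 2) = 4 * l + 2 * m := by
    rw [sum_congr rfl fun i _ => (hopt i).1.add_add_two (e i).1 (e i).2, sum_sub_distrib,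
      sum_add_distrib, ← mul_sum, ← mul_sum, sum_boole, sum_boole, ← hl, ← hq]
    simp only [sum_const, card_univ, Fintype.card_fin, nsmul_eq_mul]
    push_cast
    ring
  rw [htel]
  constructor
  · calc -4 * (l : ℤ) - 2 * m = ∑ i, -(f i (e i).1 + f i (e i).2 + 2) := by
          rw [sum_neg_distrib, hcost]; ring
      _ ≤ _ := sum_le_sum fun i _ => (hsteps i).1
  · calc _ ≤ ∑ _i : Fin (l + q + m), (2 : ℤ) := sum_le_sum fun i _ => (hsteps i).2
      _ = 2 * (l + q + m) := by
        rw [sum_const, card_univ, Fintype.card_fin, nsmul_eq_mul]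
        push_cast
        ring

theorem stmt7 {V : Type*} [Fintype V] [Nonempty V] (G H : SimpleGraph V) (l q m : ℕ)
    (Gs : Fin (l + q + m + 1) → SimpleGraph V)
    (e : Fin (l + q + m) → V × V)
    (f : Fin (l + q + m) → V → ℤ)
    (h0 : Gs 0 = G) (hlast : Gs (Fin.last _) = H)
    (hstep : ∀ i : Fin (l + q + m),
      (e i).1 ≠ (e i).2 ∧ (Gs i.castSucc).Adj (e i).1 (e i).2 ∧
        Gs i.succ = (Gs i.castSucc).deleteEdges {s((e i).1, (e i).2)})
    (hopt : ∀ i : Fin (l + q + m), IsOpinion (f i) ∧ Majoritarian (Gs i.castSucc) (f i) ∧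
      ∑ w, f i w = gamma (Gs i.castSucc))
    (hl : l = (univ.filter (fun i : Fin (l + q + m) =>
      f i (e i).1 = 1 ∧ f i (e i).2 = 1)).card)
    (hq : q = (univ.filter (fun i : Fin (l + q + m) =>
      f i (e i).1 = -1 ∧ f i (e i).2 = -1)).card) :
    -4 * l - 2 * m ≤ gamma G - gamma H ∧ gamma G - gamma H ≤ 2 * (l + q + m) :=
  stmt7_general G H l q m Gs e f h0 hlast hstep hopt hl hq
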